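/- Let n ≥ 1, let R₊ ⊂ ℝⁿ \ {0} be a finite set of nonzero vectors and κ : R₊ → [0,∞). Define the weight w(x) = ∏_{α ∈ R₊} |⟨α,x⟩|^{2κ(α)}, set χ = Σ_{α ∈ R₊} κ(α), assume 0 < 𝔠 := ∫_{ℝⁿ} e^{−|x|²/2} w(x) dx < ∞, and let ν be the finite measure ν(dx) = 𝔠^{−1} e^{−|x|²/2} w(x) dx. For s ∈ (0,1/2), disjoint measurable A, B ⊂ ℝⁿ, set L̃_s(A,B) = ∫_A ∫_B |x−y|^{−(2χ+n+2s)} ν(dy) ν(dx), and for an open set Ω ⊂ ℝⁿ and a measurable set E ⊂ ℝⁿ set Pẽr_s(E,Ω) = L̃_s(E∩Ω, E^c∩Ω) + L̃_s(E∩Ω, E^c∩Ω^c) + L̃_s(E∩Ω^c, E^c∩Ω). If Pẽr_{s₀}(E,Ω) < ∞ for some s₀ ∈ (0,1/2), then lim_{s→0⁺} s · Pẽr_s(E,Ω) = 0. -/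

import Mathlib

/-!
The kernel `|x - y|^{-(2χ+n+2s)}` is at most `1` where `|x - y| ≥ 1` and increases with `s` where
`|x - y| ≤ 1`, so for `0 < s ≤ s₀` it is bounded by `|x - y|^{-(2χ+n+2s₀)} + 1`. Since `ν` is finite,
`Pẽr_s(E,Ω) ≤ Pẽr_{s₀}(E,Ω) + 3 ν(ℝⁿ)²` stays bounded as `s → 0⁺`, and `s · Pẽr_s(E,Ω) → 0`.
-/

open MeasureTheory Real Filter Topology Set
open scoped ENNReal RealInnerProductSpace

/-- The Dunkl weight `w(x) = ∏_{α ∈ R₊} |⟨α,x⟩|^{2κ(α)}`. -/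
noncomputable def dunklWeight (n : ℕ) (R : Finset (EuclideanSpace ℝ (Fin n)))
    (κ : EuclideanSpace ℝ (Fin n) → ℝ) (x : EuclideanSpace ℝ (Fin n)) : ℝ :=
  ∏ α ∈ R, |⟪α, x⟫| ^ (2 * κ α)

/-- The Gaussian-type measure `ν(dx) = 𝔠⁻¹ e^{-|x|²/2} w(x) dx`. -/
noncomputable def nuMeasure (n : ℕ) (R : Finset (EuclideanSpace ℝ (Fin n)))
    (κ : EuclideanSpace ℝ (Fin n) → ℝ) (c : ℝ) :
    Measure (EuclideanSpace ℝ (Fin n)) :=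
  volume.withDensity
    (fun x => ENNReal.ofReal (c⁻¹ * Real.exp (-‖x‖ ^ 2 / 2) * dunklWeight n R κ x))

/-- The weighted interaction functional
`L̃_s(A,B) = ∫_A ∫_B |x−y|^{-(2χ+n+2s)} ν(dy) ν(dx)` with `χ = Σ_{α ∈ R₊} κ(α)`. -/
noncomputable def wL (n : ℕ) (R : Finset (EuclideanSpace ℝ (Fin n)))
    (κ : EuclideanSpace ℝ (Fin n) → ℝ) (c s : ℝ)
    (A B : Set (EuclideanSpace ℝ (Fin n))) : ℝ≥0∞ :=
  ∫⁻ x in A, (∫⁻ y in B,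
    ENNReal.ofReal (‖x - y‖ ^ (-(2 * (∑ α ∈ R, κ α) + (n : ℝ) + 2 * s)))
      ∂(nuMeasure n R κ c)) ∂(nuMeasure n R κ c)

/-- The weighted `s`-perimeter
`Pẽr_s(E,Ω) = L̃_s(E∩Ω, Eᶜ∩Ω) + L̃_s(E∩Ω, Eᶜ∩Ωᶜ) + L̃_s(E∩Ωᶜ, Eᶜ∩Ω)`. -/
noncomputable def wPer (n : ℕ) (R : Finset (EuclideanSpace ℝ (Fin n)))
    (κ : EuclideanSpace ℝ (Fin n) → ℝ) (c s : ℝ)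
    (E Ω : Set (EuclideanSpace ℝ (Fin n))) : ℝ≥0∞ :=
  wL n R κ c s (E ∩ Ω) (Eᶜ ∩ Ω) + wL n R κ c s (E ∩ Ω) (Eᶜ ∩ Ωᶜ) +
    wL n R κ c s (E ∩ Ωᶜ) (Eᶜ ∩ Ω)

lemma Real.rpow_neg_le_rpow_neg_add_one {r a b : ℝ} (hr : 0 ≤ r) (ha : 0 ≤ a) (hab : a ≤ b) :
    r ^ (-a) ≤ r ^ (-b) + 1 := by
  rcases hr.eq_or_lt with rfl | hr
  · linarith [Real.zero_rpow_le_one (-a), Real.rpow_nonneg le_rfl (-b)]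
  rcases le_total r 1 with hr1 | hr1
  · linarith [Real.rpow_le_rpow_of_exponent_ge hr hr1 (neg_le_neg hab)]
  · linarith [Real.rpow_le_one_of_one_le_of_nonpos hr1 (neg_nonpos.mpr ha),
      Real.rpow_nonneg hr.le (-b)]

lemma setLIntegral_setLIntegral_le_add_mul {α : Type*} [MeasurableSpace α] (μ : Measure α)
    {f g : α → α → ℝ≥0∞} (hfg : ∀ x y, f x y ≤ g x y + 1) (A B : Set α) :
    ∫⁻ x in A, ∫⁻ y in B, f x y ∂μ ∂μ ≤ ∫⁻ x in A, ∫⁻ y in B, g x y ∂μ ∂μ + μ B * μ A :=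
  calc ∫⁻ x in A, ∫⁻ y in B, f x y ∂μ ∂μ
      ≤ ∫⁻ x in A, ∫⁻ y in B, (g x y + 1) ∂μ ∂μ := by gcongr with x y; exact hfg x y
    _ = ∫⁻ x in A, ∫⁻ y in B, g x y ∂μ ∂μ + μ B * μ A := by
      simp only [lintegral_add_right _ measurable_const, setLIntegral_const, one_mul]

lemma dunklWeight_nonneg (n : ℕ) (R : Finset (EuclideanSpace ℝ (Fin n)))
    (κ : EuclideanSpace ℝ (Fin n) → ℝ) (x : EuclideanSpace ℝ (Fin n)) :
    0 ≤ dunklWeight n R κ x :=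
  Finset.prod_nonneg fun _ _ => Real.rpow_nonneg (abs_nonneg _) _

lemma nuMeasure_univ (n : ℕ) (R : Finset (EuclideanSpace ℝ (Fin n)))
    (κ : EuclideanSpace ℝ (Fin n) → ℝ) (c : ℝ)
    (hceq : (∫⁻ x, ENNReal.ofReal (Real.exp (-‖x‖ ^ 2 / 2) * dunklWeight n R κ x))
      = ENNReal.ofReal c) :
    nuMeasure n R κ c univ = ENNReal.ofReal c⁻¹ * ENNReal.ofReal c := by
  rw [nuMeasure, withDensity_apply _ MeasurableSet.univ, Measure.restrict_univ, ← hceq,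
    ← lintegral_const_mul' _ _ ENNReal.ofReal_ne_top]
  congr 1 with x
  rw [mul_assoc, ENNReal.ofReal_mul' (mul_nonneg (exp_pos _).le (dunklWeight_nonneg n R κ x))]

lemma isFiniteMeasure_nuMeasure (n : ℕ) (R : Finset (EuclideanSpace ℝ (Fin n)))
    (κ : EuclideanSpace ℝ (Fin n) → ℝ) (c : ℝ)
    (hceq : (∫⁻ x, ENNReal.ofReal (Real.exp (-‖x‖ ^ 2 / 2) * dunklWeight n R κ x))
      = ENNReal.ofReal c) :
    IsFiniteMeasure (nuMeasure n R κ c) := by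
  constructor
  rw [nuMeasure_univ n R κ c hceq]
  finiteness

lemma wL_le_wL_add_mul (n : ℕ) (R : Finset (EuclideanSpace ℝ (Fin n)))
    (κ : EuclideanSpace ℝ (Fin n) → ℝ) (hκ : ∀ α ∈ R, 0 ≤ κ α) (c : ℝ)
    {s s₀ : ℝ} (hs : 0 < s) (hss₀ : s ≤ s₀) (A B : Set (EuclideanSpace ℝ (Fin n))) :
    wL n R κ c s A B ≤ wL n R κ c s₀ A B + nuMeasure n R κ c B * nuMeasure n R κ c A := by
  have hχ : 0 ≤ ∑ α ∈ R, κ α := Finset.sum_nonneg hκ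
  refine setLIntegral_setLIntegral_le_add_mul _ (fun x y => ?_) A B
  rw [← ENNReal.ofReal_one, ← ENNReal.ofReal_add (Real.rpow_nonneg (norm_nonneg _) _) zero_le_one]
  exact ENNReal.ofReal_le_ofReal
    (Real.rpow_neg_le_rpow_neg_add_one (norm_nonneg _) (by positivity) (by linarith))

lemma wPer_le_wPer_add (n : ℕ) (R : Finset (EuclideanSpace ℝ (Fin n)))
    (κ : EuclideanSpace ℝ (Fin n) → ℝ) (hκ : ∀ α ∈ R, 0 ≤ κ α) (c : ℝ)
    {s s₀ : ℝ} (hs : 0 < s) (hss₀ : s ≤ s₀) (E Ω : Set (EuclideanSpace ℝ (Fin n))) :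
    wPer n R κ c s E Ω ≤ wPer n R κ c s₀ E Ω + 3 * nuMeasure n R κ c univ ^ 2 := by
  set ν := nuMeasure n R κ c
  have hprod (A B : Set (EuclideanSpace ℝ (Fin n))) : ν B * ν A ≤ ν univ ^ 2 := by
    rw [sq]; gcongr <;> exact subset_univ _
  have hL (A B : Set (EuclideanSpace ℝ (Fin n))) :
      wL n R κ c s A B ≤ wL n R κ c s₀ A B + ν univ ^ 2 :=
    (wL_le_wL_add_mul n R κ hκ c hs hss₀ A B).trans (by gcongr; exact hprod A B)
  calc wPer n R κ c s E Ω
      ≤ (wL n R κ c s₀ (E ∩ Ω) (Eᶜ ∩ Ω) + ν univ ^ 2)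
          + (wL n R κ c s₀ (E ∩ Ω) (Eᶜ ∩ Ωᶜ) + ν univ ^ 2)
          + (wL n R κ c s₀ (E ∩ Ωᶜ) (Eᶜ ∩ Ω) + ν univ ^ 2) := by
        unfold wPer; gcongr <;> exact hL _ _
    _ = wPer n R κ c s₀ E Ω + 3 * ν univ ^ 2 := by unfold wPer; ring

lemma tendsto_ofReal_mul_nhdsGT_zero_of_eventually_le {f : ℝ → ℝ≥0∞} {K : ℝ≥0∞}
    (hK : K ≠ ⊤) (hf : ∀ᶠ s in 𝓝[>] 0, f s ≤ K) :
    Tendsto (fun s => ENNReal.ofReal s * f s) (𝓝[>] 0) (𝓝 0) := by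
  have hofReal : Tendsto ENNReal.ofReal (𝓝[>] 0) (𝓝 0) := by
    simpa using (ENNReal.continuous_ofReal.tendsto 0).mono_left nhdsWithin_le_nhds
  refine tendsto_of_tendsto_of_tendsto_of_le_of_le' tendsto_const_nhds
    (by simpa using ENNReal.Tendsto.mul_const hofReal (Or.inr hK)) (Eventually.of_forall fun _ => zero_le) ?_
  filter_upwards [hf] with s hs
  exact mul_le_mul_right hs _

theorem statement17_general (n : ℕ)
    (R : Finset (EuclideanSpace ℝ (Fin n)))
    (κ : EuclideanSpace ℝ (Fin n) → ℝ) (hκ : ∀ α ∈ R, 0 ≤ κ α)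
    (c : ℝ)
    (hceq : (∫⁻ x, ENNReal.ofReal (Real.exp (-‖x‖ ^ 2 / 2) * dunklWeight n R κ x))
      = ENNReal.ofReal c)
    (Ω : Set (EuclideanSpace ℝ (Fin n)))
    (E : Set (EuclideanSpace ℝ (Fin n)))
    (s₀ : ℝ) (hs₀ : s₀ ∈ Set.Ioo (0:ℝ) (1/2))
    (hfin : wPer n R κ c s₀ E Ω < ⊤) :
    Tendsto (fun s : ℝ => ENNReal.ofReal s * wPer n R κ c s E Ω)
      (𝓝[>] (0:ℝ)) (𝓝 0) := by
  have := isFiniteMeasure_nuMeasure n R κ c hceq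
  refine tendsto_ofReal_mul_nhdsGT_zero_of_eventually_le
    (K := wPer n R κ c s₀ E Ω + 3 * nuMeasure n R κ c univ ^ 2) (by finiteness) ?_
  filter_upwards [Ioc_mem_nhdsGT hs₀.1] with s hs
  exact wPer_le_wPer_add n R κ hκ c hs.1 hs.2 E Ω

/-- if the weighted perimeter `Pẽr_{s₀}(E,Ω)` is finite for some
`s₀ ∈ (0,1/2)`, then `lim_{s→0⁺} s Pẽr_s(E,Ω) = 0`. -/
theorem statement17 (n : ℕ) (hn : 1 ≤ n)
    (R : Finset (EuclideanSpace ℝ (Fin n))) (hR : ∀ α ∈ R, α ≠ 0)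
    (κ : EuclideanSpace ℝ (Fin n) → ℝ) (hκ : ∀ α ∈ R, 0 ≤ κ α)
    (c : ℝ) (hc : 0 < c)
    (hceq : (∫⁻ x, ENNReal.ofReal (Real.exp (-‖x‖ ^ 2 / 2) * dunklWeight n R κ x))
      = ENNReal.ofReal c)
    (Ω : Set (EuclideanSpace ℝ (Fin n))) (hΩ : IsOpen Ω)
    (E : Set (EuclideanSpace ℝ (Fin n))) (hE : MeasurableSet E)
    (s₀ : ℝ) (hs₀ : s₀ ∈ Set.Ioo (0:ℝ) (1/2))
    (hfin : wPer n R κ c s₀ E Ω < ⊤) :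
    Tendsto (fun s : ℝ => ENNReal.ofReal s * wPer n R κ c s E Ω)
      (𝓝[>] (0:ℝ)) (𝓝 0) :=
  statement17_general n R κ hκ c hceq Ω E s₀ hs₀ hfin
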